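/- Let F ∈ ℝ with F > 0, let b ∈ ℝ with b > 0, set a = √(b² + F²), and let φ ∈ (−π, π]. Then the point z = a·cos φ + i·b·sin φ lies in ℂ ∖ [−F,F], and U_F(z) = ((a−b)/F)·(cos φ − i·sin φ); in particular Re(U_F(z)) = ((a−b)/F)·cos φ, Im(U_F(z)) = −((a−b)/F)·sin φ, and |U_F(z)| = (a−b)/F > 0. -/

import Mathlib

open scoped Classical

/-- The real segment `[−F, F]` viewed as a subset of `ℂ`. -/
def segC (F : ℝ) : Set ℂ := {z : ℂ | z.im = 0 ∧ -F ≤ z.re ∧ z.re ≤ F}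

/-- `ℂ⁺`: the open right half-plane together with the nonnegative imaginary axis. -/
def Cplus : Set ℂ := {z : ℂ | 0 < z.re ∨ (z.re = 0 ∧ 0 ≤ z.im)}

/-- `U_F(z) = (z ∓ √(z²−F²))/F`, with `−` on `ℂ⁺` and `+` off `ℂ⁺`
(principal branch of the square root). -/
noncomputable def funU (F : ℝ) (z : ℂ) : ℂ :=
  if z ∈ Cplus then (z - (z ^ 2 - (F : ℂ) ^ 2) ^ ((1 : ℂ) / 2)) / F
  else (z + (z ^ 2 - (F : ℂ) ^ 2) ^ ((1 : ℂ) / 2)) / F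

/-- `T_F(z) = ±√(z²−F²)`, with `+` on `ℂ⁺` and `−` off `ℂ⁺`. -/
noncomputable def funT (F : ℝ) (z : ℂ) : ℂ :=
  if z ∈ Cplus then (z ^ 2 - (F : ℂ) ^ 2) ^ ((1 : ℂ) / 2)
  else -((z ^ 2 - (F : ℂ) ^ 2) ^ ((1 : ℂ) / 2))

/-- `W_F(z) = ((z+F)/(z−F))^{1/4} + ((z−F)/(z+F))^{1/4}` (principal fourth roots). -/
noncomputable def funW (F : ℝ) (z : ℂ) : ℂ :=
  ((z + F) / (z - F)) ^ ((1 : ℂ) / 4) + ((z - F) / (z + F)) ^ ((1 : ℂ) / 4)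

/-! With `a² = b² + F²`, the point `z = a cos φ + i b sin φ` satisfies `z² − F² = s²` for
`s = b cos φ + i a sin φ`, and `s` lies in `ℂ⁺` exactly when `z` does (both conditions only
depend on the signs of `cos φ` and `sin φ`). Since the principal square root maps into `ℂ⁺`, on
either branch `U_F(z) = (z − s)/F = ((a − b)/F) e^{−iφ}`. -/

open Complex

namespace Cplus

theorem eq_zero_of_neg_mem {s : ℂ} (hs : s ∈ Cplus) (hs' : -s ∈ Cplus) : s = 0 := by
  simp only [Cplus, Set.mem_ofPred_eq, neg_re, neg_im] at hs hs'
  apply Complex.ext <;> simp only [zero_re, zero_im] <;>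
    rcases hs with h | ⟨h1, h2⟩ <;> rcases hs' with h' | ⟨h1', h2'⟩ <;> linarith

theorem neg_mem_of_notMem {s : ℂ} (hs : s ∉ Cplus) : -s ∈ Cplus := by
  simp only [Cplus, Set.mem_ofPred_eq, neg_re, neg_im, not_or, not_and, not_le,
    not_lt] at hs ⊢
  rcases hs.1.lt_or_eq with h | h
  · exact .inl (by linarith)
  · exact .inr ⟨by linarith, by linarith [hs.2 h]⟩

/-- `arg (w ^ (1/2)) = arg w / 2 ∈ (-π/2, π/2]`. -/
theorem cpow_half_mem (w : ℂ) : w ^ ((1 : ℂ) / 2) ∈ Cplus := by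
  rcases eq_or_ne w 0 with rfl | hw
  · right
    simp
  have him : (log w * (1 / 2)).im = w.arg / 2 := by
    simp [log_im, mul_im, div_eq_mul_inv]
  have hlt : -(Real.pi / 2) < w.arg / 2 := by linarith [neg_pi_lt_arg w]
  have hle : w.arg / 2 ≤ Real.pi / 2 := by linarith [arg_le_pi w]
  simp only [Cplus, Set.mem_ofPred_eq, cpow_def_of_ne_zero hw, exp_re, exp_im, him]
  rcases hle.lt_or_eq with hlt' | heq
  · exact .inl (mul_pos (Real.exp_pos _) (Real.cos_pos_of_mem_Ioo ⟨hlt, hlt'⟩))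
  · exact .inr ⟨by simp [heq], by simp [heq, (Real.exp_pos _).le]⟩

theorem eq_of_sq_eq {s t : ℂ} (hs : s ∈ Cplus) (ht : t ∈ Cplus) (h : t ^ 2 = s ^ 2) :
    t = s := by
  rcases mul_eq_zero.1 (by linear_combination h : (t - s) * (t + s) = 0) with h | h
  · exact sub_eq_zero.1 h
  · have hts : t = -s := eq_neg_of_add_eq_zero_left h
    rw [hts] at ht
    rw [hts, eq_zero_of_neg_mem hs ht, neg_zero]

theorem sq_cpow_half {s : ℂ} (hs : s ∈ Cplus) : (s ^ 2) ^ ((1 : ℂ) / 2) = s :=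
  eq_of_sq_eq hs (cpow_half_mem _) (by simp)

theorem ofReal_mul_add_I_mul_mem_iff {x y : ℝ} (hx : 0 < x) (hy : 0 < y) (c d : ℝ) :
    ((x * c : ℝ) : ℂ) + I * (y * d : ℝ) ∈ Cplus ↔ 0 < c ∨ (c = 0 ∧ 0 ≤ d) := by
  simp only [Cplus, Set.mem_ofPred_eq, add_re, add_im, ofReal_re, ofReal_im, I_re, I_im,
    mul_re, mul_im]
  simp [mul_pos_iff_of_pos_left hx, hx.ne', mul_nonneg_iff_of_pos_left hy]

end Cplus

theorem funU_eq_of_sq_sub_sq_eq {F : ℝ} {z s : ℂ} (hsq : z ^ 2 - (F : ℂ) ^ 2 = s ^ 2)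
    (hmem : s ∈ Cplus ↔ z ∈ Cplus) : funU F z = (z - s) / F := by
  unfold funU
  split_ifs with hz
  · rw [hsq, Cplus.sq_cpow_half (hmem.2 hz)]
  · have hneg := Cplus.neg_mem_of_notMem (mt hmem.1 hz)
    rw [hsq, ← neg_sq, Cplus.sq_cpow_half hneg, sub_eq_add_neg]

theorem sq_sub_sq_eq_sq_of_sq_eq {F a b : ℝ} (hab : a ^ 2 = b ^ 2 + F ^ 2) (φ : ℝ) :
    (((a * Real.cos φ : ℝ) : ℂ) + I * (b * Real.sin φ : ℝ)) ^ 2 - (F : ℂ) ^ 2 =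
      (((b * Real.cos φ : ℝ) : ℂ) + I * (a * Real.sin φ : ℝ)) ^ 2 := by
  have habC : (a : ℂ) ^ 2 = b ^ 2 + F ^ 2 := by exact_mod_cast hab
  have trig : ((Real.sin φ : ℝ) : ℂ) ^ 2 + ((Real.cos φ : ℝ) : ℂ) ^ 2 = 1 := by
    exact_mod_cast Real.sin_sq_add_cos_sq φ
  push_cast [-ofReal_cos, -ofReal_sin]
  linear_combination ((Real.cos φ : ℂ) ^ 2 + (Real.sin φ : ℂ) ^ 2) * habC + (F : ℂ) ^ 2 * trig
    + ((b : ℂ) ^ 2 - a ^ 2) * (Real.sin φ : ℂ) ^ 2 * I_sq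

theorem norm_cos_sub_I_mul_sin (φ : ℝ) :
    ‖((Real.cos φ : ℝ) : ℂ) - I * (Real.sin φ : ℝ)‖ = 1 := by
  have h := norm_exp_ofReal_mul_I (-φ)
  rwa [exp_mul_I, ← ofReal_cos, ← ofReal_sin, Real.cos_neg, Real.sin_neg, ofReal_neg,
    mul_comm, mul_neg, ← sub_eq_add_neg] at h

theorem ofReal_mul_add_I_mul_notMem_segC {F a b : ℝ} (hF : 0 < F) (hb : 0 < b) (hFa : F < a)
    (φ : ℝ) : ((a * Real.cos φ : ℝ) : ℂ) + I * (b * Real.sin φ : ℝ) ∉ segC F := by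
  rintro ⟨him, hle, hge⟩
  have hsin : Real.sin φ = 0 := by simpa [hb.ne', -ofReal_sin] using him
  have hcos : Real.cos φ ^ 2 = 1 := by nlinarith [Real.sin_sq_add_cos_sq φ]
  simp only [add_re, ofReal_re, mul_re, I_re, I_im, ofReal_im, zero_mul, mul_zero,
    sub_zero, add_zero] at hle hge
  nlinarith [mul_nonneg (by linarith : 0 ≤ F - a * Real.cos φ)
    (by linarith : 0 ≤ F + a * Real.cos φ), mul_self_lt_mul_self hF.le hFa]

theorem stmt6_general (F b : ℝ) (hF : 0 < F) (hb : 0 < b) (a : ℝ)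
    (ha : a = Real.sqrt (b ^ 2 + F ^ 2)) (φ : ℝ)
    (z : ℂ) (hz : z = (a * Real.cos φ : ℝ) + Complex.I * (b * Real.sin φ : ℝ)) :
    z ∉ segC F ∧
    funU F z = (((a - b) / F : ℝ) : ℂ) * ((Real.cos φ : ℝ) - Complex.I * (Real.sin φ : ℝ)) ∧
    (funU F z).re = ((a - b) / F) * Real.cos φ ∧
    (funU F z).im = -(((a - b) / F) * Real.sin φ) ∧
    ‖funU F z‖ = (a - b) / F ∧
    0 < (a - b) / F := by
  have hab : a ^ 2 = b ^ 2 + F ^ 2 := ha ▸ Real.sq_sqrt (by positivity)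
  have ha0 : 0 ≤ a := ha ▸ Real.sqrt_nonneg _
  have hba : b < a := by nlinarith
  have hr : 0 < (a - b) / F := div_pos (by linarith) hF
  have hU : funU F z = (((a - b) / F : ℝ) : ℂ) * ((Real.cos φ : ℝ) - I * (Real.sin φ : ℝ)) := by
    subst hz
    rw [funU_eq_of_sq_sub_sq_eq (sq_sub_sq_eq_sq_of_sq_eq hab φ) (by
      rw [Cplus.ofReal_mul_add_I_mul_mem_iff hb (hb.trans hba),
        Cplus.ofReal_mul_add_I_mul_mem_iff (hb.trans hba) hb])]
    have hF' : (F : ℂ) ≠ 0 := ofReal_ne_zero.2 hF.ne'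
    push_cast
    field_simp
    ring
  refine ⟨hz ▸ ofReal_mul_add_I_mul_notMem_segC hF hb (by nlinarith) φ, hU, ?_, ?_, ?_, hr⟩
  · simp [hU, -ofReal_cos, -ofReal_sin]
  · simp [hU, -ofReal_cos, -ofReal_sin]
  · rw [hU, norm_mul, norm_cos_sub_I_mul_sin, mul_one, norm_real, Real.norm_of_nonneg hr.le]

/-- elliptic coordinates. For `F, b > 0`, `a = √(b²+F²)` and
`φ ∈ (−π, π]`, the point `z = a·cos φ + i·b·sin φ` lies in `ℂ ∖ [−F,F]` and
`U_F(z) = ((a−b)/F)·(cos φ − i·sin φ)`; in particular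
`Re(U_F z) = ((a−b)/F)·cos φ`, `Im(U_F z) = −((a−b)/F)·sin φ`, and
`|U_F z| = (a−b)/F > 0`. -/
theorem stmt6 (F b : ℝ) (hF : 0 < F) (hb : 0 < b) (a : ℝ)
    (ha : a = Real.sqrt (b ^ 2 + F ^ 2)) (φ : ℝ) (hφ : φ ∈ Set.Ioc (-Real.pi) Real.pi)
    (z : ℂ) (hz : z = (a * Real.cos φ : ℝ) + Complex.I * (b * Real.sin φ : ℝ)) :
    z ∉ segC F ∧
    funU F z = (((a - b) / F : ℝ) : ℂ) * ((Real.cos φ : ℝ) - Complex.I * (Real.sin φ : ℝ)) ∧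
    (funU F z).re = ((a - b) / F) * Real.cos φ ∧
    (funU F z).im = -(((a - b) / F) * Real.sin φ) ∧
    ‖funU F z‖ = (a - b) / F ∧
    0 < (a - b) / F :=
  stmt6_general F b hF hb a ha φ z hz
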